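/- arXiv:2507.08173 — 2 statements merged into one kernel-verified Lean document; each statement's English description precedes it below -/
import Mathlib

section
/- For all real x > 0 and β > 1, the tail of the exponential series satisfies ∑_{r ∈ ℕ, r ≥ βx} x^r / r! ≤ (1/(β-1)) · (β/(2πx))^{1/2} · exp(βx(1 - log β)). -/
open Real

/-- Stirling lower bound: `√(2πn) (n/e)^n ≤ n!` for `n ≥ 1`. -/
lemma norton_stirling_lower (n : ℕ) (hn : 1 ≤ n) :
    Real.sqrt (2 * π * n) * ((n : ℝ) / Real.exp 1) ^ n ≤ (n.factorial : ℝ) := by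
  have hn' : (0 : ℝ) < n := by exact_mod_cast hn
  have h1 : Real.sqrt π ≤ Stirling.stirlingSeq n := by
    obtain ⟨k, rfl⟩ := Nat.exists_eq_add_of_le hn
    have h := Stirling.stirlingSeq'_antitone.le_of_tendsto
      ((Filter.tendsto_add_atTop_iff_nat 1).mpr Stirling.tendsto_stirlingSeq_sqrt_pi) k
    simpa [Function.comp, Nat.succ_eq_add_one, Nat.add_comm] using h
  have hd : 0 < Real.sqrt (2 * (n : ℝ)) * ((n : ℝ) / Real.exp 1) ^ n := by positivity
  rw [Stirling.stirlingSeq, le_div_iff₀ hd] at h1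
  have hsq : Real.sqrt (2 * π * n) = Real.sqrt π * Real.sqrt (2 * n) := by
    rw [← Real.sqrt_mul Real.pi_pos.le]
    ring_nf
  rw [hsq]
  calc Real.sqrt π * Real.sqrt (2 * n) * ((n : ℝ) / Real.exp 1) ^ n
      = Real.sqrt π * (Real.sqrt (2 * n) * ((n : ℝ) / Real.exp 1) ^ n) := by ring
    _ ≤ (n.factorial : ℝ) := h1

/-- The function `t ↦ t (1 + log x - log t)` is antitone on `[x, ∞)`. -/
lemma norton_mono {x a b : ℝ} (hx : 0 < x) (hxb : x ≤ b) (hba : b ≤ a) :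
    a * (1 + Real.log x - Real.log a) ≤ b * (1 + Real.log x - Real.log b) := by
  have hb : 0 < b := hx.trans_le hxb
  have ha : 0 < a := hb.trans_le hba
  have h1 : Real.log b - Real.log a ≤ b / a - 1 := by
    have h := Real.log_le_sub_one_of_pos (show (0:ℝ) < b / a by positivity)
    rwa [Real.log_div hb.ne' ha.ne'] at h
  have hF1 : a * (Real.log b - Real.log a) ≤ b - a := by
    have h2 := mul_le_mul_of_nonneg_left h1 ha.le
    have h3 : a * (b / a - 1) = b - a := by field_simp
    linarith
  have h2 : Real.log x - Real.log b ≤ 0 :=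
    sub_nonpos.mpr (Real.log_le_log hx hxb)
  have hF2 : a * (Real.log x - Real.log b) ≤ b * (Real.log x - Real.log b) :=
    mul_le_mul_of_nonpos_right hba h2
  nlinarith [hF1, hF2]

/-- Norton's tail estimate for the exponential (Poisson) series. -/
theorem norton_tail (x β : ℝ) (hx : 0 < x) (hβ : 1 < β) :
    (∑' r : ℕ, if β * x ≤ r then x ^ r / r.factorial else 0) ≤
      (1 / (β - 1)) * (β / (2 * π * x)) ^ ((1 : ℝ) / 2) *
        Real.exp (β * x * (1 - Real.log β)) := by
  have hβ0 : (0:ℝ) < β := lt_trans one_pos hβ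
  have hβ1 : (0:ℝ) < β - 1 := sub_pos.mpr hβ
  have hβx : 0 < β * x := mul_pos hβ0 hx
  set f : ℕ → ℝ := fun r => if β * x ≤ r then x ^ r / r.factorial else 0 with hf
  set m : ℕ := ⌈β * x⌉₊ with hmdef
  have hm0 : 1 ≤ m := Nat.one_le_iff_ne_zero.mpr (Nat.ceil_pos.mpr hβx).ne'
  have hmR : β * x ≤ (m : ℝ) := Nat.le_ceil _
  have hmRpos : (0:ℝ) < m := lt_of_lt_of_le hβx hmR
  set T : ℝ := x ^ m / m.factorial with hT
  have hT0 : 0 < T := by positivity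
  -- geometric bound on the shifted terms
  have keyg : ∀ k : ℕ, x ^ (m + k) / ((m + k).factorial : ℝ) ≤ T * (1 / β) ^ k := by
    intro k
    induction k with
    | zero => simp [hT]
    | succ k ih =>
      have hfk : ((m + k).factorial : ℝ) ≠ 0 := by positivity
      have h1 : x ^ (m + (k + 1)) / ((m + (k + 1)).factorial : ℝ)
          = (x / ((m : ℝ) + k + 1)) * (x ^ (m + k) / ((m + k).factorial : ℝ)) := by
        have : m + (k + 1) = (m + k) + 1 := by omega
        rw [this, Nat.factorial_succ]
        push_cast
        field_simp
        ring
      have h2 : x / ((m : ℝ) + k + 1) ≤ 1 / β := by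
        rw [div_le_div_iff₀ (by positivity) hβ0]
        have hk : (0:ℝ) ≤ k := Nat.cast_nonneg k
        nlinarith [hmR]
      have hnn : (0:ℝ) ≤ x ^ (m + k) / ((m + k).factorial : ℝ) := by positivity
      calc x ^ (m + (k + 1)) / ((m + (k + 1)).factorial : ℝ)
          = (x / ((m : ℝ) + k + 1)) * (x ^ (m + k) / ((m + k).factorial : ℝ)) := h1
        _ ≤ (1 / β) * (T * (1 / β) ^ k) := by
            apply mul_le_mul h2 ih hnn (by positivity)
        _ = T * (1 / β) ^ (k + 1) := by ring
  have hfml : ∀ k : ℕ, f (m + k) = x ^ (m + k) / ((m + k).factorial : ℝ) := by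
    intro k
    apply if_pos
    have hk : (0:ℝ) ≤ k := Nat.cast_nonneg k
    push_cast
    linarith
  have hβinv0 : (0:ℝ) ≤ 1 / β := by positivity
  have hβinv1 : (1:ℝ) / β < 1 := by rw [div_lt_one hβ0]; exact hβ
  have hgeo : Summable (fun k : ℕ => T * (1 / β) ^ k) :=
    (summable_geometric_of_lt_one hβinv0 hβinv1).mul_left T
  have hfnn : ∀ r : ℕ, 0 ≤ f r := by
    intro r
    simp only [hf]
    split_ifs with h
    · positivity
    · exact le_rfl
  have hshiftsum : Summable (fun k : ℕ => f (m + k)) := by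
    apply Summable.of_nonneg_of_le (fun k => hfnn (m + k)) _ hgeo
    intro k
    rw [hfml k]
    exact keyg k
  have hsupp : Function.support f ⊆ Set.range (fun k : ℕ => m + k) := by
    intro r hr
    have hle : β * x ≤ (r : ℝ) := by
      by_contra h
      exact hr (if_neg h)
    have hmr : m ≤ r := Nat.ceil_le.mpr hle
    exact ⟨r - m, show m + (r - m) = r by omega⟩
  have hshift : (∑' k : ℕ, f (m + k)) = ∑' r : ℕ, f r :=
    Function.Injective.tsum_eq (fun a b h => by omega) hsupp
  have hgeosum : (∑' k : ℕ, (1 / β) ^ k) = β / (β - 1) := by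
    rw [tsum_geometric_of_lt_one hβinv0 hβinv1]
    rw [show (1 : ℝ) - 1 / β = (β - 1) / β by field_simp, inv_div]
  have hsumf : (∑' r : ℕ, f r) ≤ T * (β / (β - 1)) := by
    rw [← hshift]
    calc (∑' k : ℕ, f (m + k)) ≤ ∑' k : ℕ, T * (1 / β) ^ k := by
          apply Summable.tsum_le_tsum _ hshiftsum hgeo
          intro k
          rw [hfml k]
          exact keyg k
      _ = T * ∑' k : ℕ, (1 / β) ^ k := tsum_mul_left
      _ = T * (β / (β - 1)) := by rw [hgeosum]
  -- Stirling bound on T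
  have hstir := norton_stirling_lower m hm0
  have hsqm : 0 < Real.sqrt (2 * π * m) := by positivity
  have hpowm : ((m : ℝ) / Real.exp 1) ^ m = Real.exp ((m : ℝ) * (Real.log m - 1)) := by
    rw [Real.exp_nat_mul]
    congr 1
    rw [Real.exp_sub, Real.exp_log hmRpos]
  have hxm : x ^ m = Real.exp ((m : ℝ) * Real.log x) := by
    rw [Real.exp_nat_mul, Real.exp_log hx]
  have hA : (m : ℝ) * (1 + Real.log x - Real.log m) ≤ β * x * (1 - Real.log β) := by
    have hmono := norton_mono hx (le_mul_of_one_le_left hx.le hβ.le) hmR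
    rw [Real.log_mul hβ0.ne' hx.ne'] at hmono
    nlinarith [hmono]
  have hTb : T ≤ Real.exp (β * x * (1 - Real.log β)) / Real.sqrt (2 * π * m) := by
    have hd0 : 0 < Real.sqrt (2 * π * m) * ((m : ℝ) / Real.exp 1) ^ m := by positivity
    calc T = x ^ m / (m.factorial : ℝ) := rfl
      _ ≤ x ^ m / (Real.sqrt (2 * π * m) * ((m : ℝ) / Real.exp 1) ^ m) := by
          apply div_le_div_of_nonneg_left (by positivity) hd0 hstir
      _ = Real.exp ((m : ℝ) * (1 + Real.log x - Real.log m)) / Real.sqrt (2 * π * m) := by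
          rw [hpowm, hxm,
            show ((m:ℝ) * (1 + Real.log x - Real.log (m:ℝ)))
              = (m:ℝ) * Real.log x - (m:ℝ) * (Real.log (m:ℝ) - 1) by ring,
            Real.exp_sub]
          rw [div_div, mul_comm (Real.sqrt (2 * π * m))]
      _ ≤ Real.exp (β * x * (1 - Real.log β)) / Real.sqrt (2 * π * m) := by
          gcongr
  -- comparing the square-root factors
  have hfrac : β / Real.sqrt (2 * π * m) ≤ (β / (2 * π * x)) ^ ((1 : ℝ) / 2) := by
    rw [← Real.sqrt_eq_rpow]
    rw [div_le_iff₀ hsqm, ← Real.sqrt_mul (by positivity)]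
    rw [Real.le_sqrt hβ0.le (by positivity)]
    rw [div_mul_eq_mul_div, le_div_iff₀ (by positivity)]
    nlinarith [mul_le_mul_of_nonneg_left hmR (show (0:ℝ) ≤ 2 * π * β by positivity), Real.pi_pos]
  -- putting it together
  have hexp0 : (0:ℝ) < Real.exp (β * x * (1 - Real.log β)) := Real.exp_pos _
  calc (∑' r : ℕ, f r) ≤ T * (β / (β - 1)) := hsumf
    _ = (1 / (β - 1)) * (β * T) := by ring
    _ ≤ (1 / (β - 1)) * (β * (Real.exp (β * x * (1 - Real.log β)) / Real.sqrt (2 * π * m))) := by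
        apply mul_le_mul_of_nonneg_left (mul_le_mul_of_nonneg_left hTb hβ0.le) (by positivity)
    _ = (1 / (β - 1)) * ((β / Real.sqrt (2 * π * m)) * Real.exp (β * x * (1 - Real.log β))) := by
        ring
    _ ≤ (1 / (β - 1)) * ((β / (2 * π * x)) ^ ((1 : ℝ) / 2) * Real.exp (β * x * (1 - Real.log β))) := by
        apply mul_le_mul_of_nonneg_left (mul_le_mul_of_nonneg_right hfrac hexp0.le) (by positivity)
    _ = (1 / (β - 1)) * (β / (2 * π * x)) ^ ((1 : ℝ) / 2) *
        Real.exp (β * x * (1 - Real.log β)) := by ring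
end

section
/- For each t ∈ ℕ with t ≥ 1 and x > e, one has ∑_{m ≤ x, ω(m) = t} 1/m ≪ (κ + log log x)^t / (t−1)!, where the sum runs over all m ≤ x with ω(m) = t (not only squarefree m), κ is an absolute constant and ω(m) is the number of distinct prime factors of m. -/
open Real Finset

lemma tele (f : ℕ → ℝ) {m n : ℕ} (h : m ≤ n) :
    ∑ k ∈ Finset.Ico m n, (f k - f (k+1)) = f m - f n := by
  induction n, h using Nat.le_induction with
  | base => simp
  | succ n hmn ih => rw [Finset.sum_Ico_succ_top hmn, ih]; ring

lemma log_nat_eq_sum {n : ℕ} (hn : n ≠ 0) :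
    Real.log n = ∑ p ∈ n.primeFactors, (n.factorization p : ℝ) * Real.log p := by
  conv_lhs => rw [← Nat.factorization_prod_pow_eq_self hn]
  rw [Nat.prod_factorization_eq_prod_primeFactors, Nat.cast_prod, Real.log_prod]
  · push_cast
    exact Finset.sum_congr rfl fun p hp => by rw [Real.log_pow]
  · intro p hp
    have := (Nat.prime_of_mem_primeFactors hp).pos
    positivity

lemma fact_factorization_ge {N p : ℕ} (hp : p.Prime) (hpN : p ≤ N) :
    N / p ≤ (Nat.factorial N).factorization p := by
  rw [← hp.pow_dvd_iff_le_factorization N.factorial_ne_zero]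
  rw [Nat.Prime.pow_dvd_factorial_iff hp (Nat.lt_succ_self _)]
  have h1 : 1 ∈ Finset.Ico 1 (Nat.log p N + 1) := by
    simp only [Finset.mem_Ico, Nat.lt_succ_iff, le_refl, true_and]
    rw [Nat.le_log_iff_pow_le hp.one_lt (by have := hp.two_le; omega)]
    simpa using hpN
  calc N / p = N / p ^ 1 := by rw [pow_one]
    _ ≤ _ := Finset.single_le_sum (f := fun i => N / p ^ i) (fun i _ => Nat.zero_le _) h1

-- Chebyshev
lemma cheby (n : ℕ) : ∑ p ∈ Nat.primesBelow (n+1), Real.log p ≤ n * Real.log 4 := by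
  have h1 : Real.log (primorial n) ≤ Real.log (4^n) :=
    Real.log_le_log (by exact_mod_cast primorial_pos n) (by exact_mod_cast primorial_le_4_pow n)
  rw [Real.log_pow] at h1
  refine le_trans (le_of_eq ?_) h1
  rw [primorial, Nat.cast_prod, Real.log_prod]
  · rfl
  · intro p hp
    simp only [Finset.mem_filter] at hp
    exact_mod_cast hp.2.pos.ne'

lemma mertens1 {N : ℕ} (hN : 1 ≤ N) :
    ∑ p ∈ Nat.primesBelow (N+1), Real.log p / p ≤ Real.log N + Real.log 4 := by
  have hN0 : (0:ℝ) < N := by exact_mod_cast hN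
  rw [← mul_le_mul_iff_right₀ hN0]
  have key : ∀ p ∈ Nat.primesBelow (N+1),
      (N:ℝ) * (Real.log p / p) ≤ ((N/p : ℕ) : ℝ) * Real.log p + Real.log p := by
    intro p hp
    have hp' : p.Prime := Nat.prime_of_mem_primesBelow hp
    have hp0 : (0:ℝ) < p := by exact_mod_cast hp'.pos
    have hlog : (0:ℝ) ≤ Real.log p := Real.log_natCast_nonneg p
    have hdiv : (N:ℝ) / p ≤ ((N/p : ℕ) : ℝ) + 1 := by
      rw [div_le_iff₀ hp0]
      have := Nat.lt_mul_div_succ N hp'.pos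
      have : (N:ℝ) < p * (↑(N/p) + 1) := by exact_mod_cast this
      linarith
    calc (N:ℝ) * (Real.log p / p) = ((N:ℝ)/p) * Real.log p := by ring
      _ ≤ (((N/p : ℕ) : ℝ) + 1) * Real.log p := by
          exact mul_le_mul_of_nonneg_right hdiv hlog
      _ = ((N/p : ℕ) : ℝ) * Real.log p + Real.log p := by ring
  have h1 : ∑ p ∈ Nat.primesBelow (N+1), ((N/p : ℕ) : ℝ) * Real.log p
      ≤ Real.log (Nat.factorial N) := by
    rw [log_nat_eq_sum (Nat.factorial_ne_zero N)]
    have step1 : ∑ p ∈ Nat.primesBelow (N+1), ((N/p : ℕ) : ℝ) * Real.log p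
        ≤ ∑ p ∈ Nat.primesBelow (N+1), ((Nat.factorial N).factorization p : ℝ) * Real.log p := by
      refine Finset.sum_le_sum fun p hp => ?_
      have hp' : p.Prime := Nat.prime_of_mem_primesBelow hp
      have hpN : p ≤ N := by have := Nat.lt_of_mem_primesBelow hp; omega
      refine mul_le_mul_of_nonneg_right ?_ (Real.log_natCast_nonneg p)
      exact_mod_cast fact_factorization_ge hp' hpN
    refine step1.trans (Finset.sum_le_sum_of_subset_of_nonneg ?_ ?_)
    · intro p hp
      have hp' : p.Prime := Nat.prime_of_mem_primesBelow hp
      have hpN : p ≤ N := by have := Nat.lt_of_mem_primesBelow hp; omega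
      exact Nat.mem_primeFactors.2 ⟨hp', Nat.dvd_factorial hp'.pos hpN, Nat.factorial_ne_zero N⟩
    · intro p _ _
      have : (0:ℝ) ≤ Real.log p := Real.log_natCast_nonneg p
      positivity
  have hfact : Real.log (Nat.factorial N) ≤ N * Real.log N := by
    calc Real.log (Nat.factorial N) ≤ Real.log ((N:ℕ)^N : ℕ) :=
          Real.log_le_log (by exact_mod_cast Nat.factorial_pos N)
            (by exact_mod_cast Nat.factorial_le_pow N)
      _ = N * Real.log N := by rw [Nat.cast_pow, Real.log_pow]
  calc (N:ℝ) * ∑ p ∈ Nat.primesBelow (N+1), Real.log p / p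
      = ∑ p ∈ Nat.primesBelow (N+1), (N:ℝ) * (Real.log p / p) := Finset.mul_sum _ _ _
    _ ≤ ∑ p ∈ Nat.primesBelow (N+1), (((N/p : ℕ) : ℝ) * Real.log p + Real.log p) :=
        Finset.sum_le_sum key
    _ = (∑ p ∈ Nat.primesBelow (N+1), ((N/p : ℕ) : ℝ) * Real.log p)
        + ∑ p ∈ Nat.primesBelow (N+1), Real.log p := Finset.sum_add_distrib
    _ ≤ N * Real.log N + N * Real.log 4 := add_le_add (h1.trans hfact) (cheby N)
    _ = N * (Real.log N + Real.log 4) := by ring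

lemma alg1 (a b : ℝ) (ha : a ≠ 0) (hb : b ≠ 0) : (1/a - 1/b) * a = (b - a)/b := by
  field_simp

lemma alg2 (a b : ℝ) (hb : b ≠ 0) : a/b - 1 = -((b - a)/b) := by
  field_simp
  ring

lemma log4_eq : Real.log 4 = 2 * Real.log 2 := by
  rw [show (4:ℝ) = 2^2 by norm_num, Real.log_pow]; push_cast; ring

lemma mertens2 {N : ℕ} (hN : 2 ≤ N) :
    ∑ p ∈ Nat.primesBelow (N+1), (1:ℝ)/p ≤ Real.log (Real.log N) + 6 := by
  set f : ℕ → ℝ := fun n => 1 / Real.log n with hf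
  set G : ℕ → ℝ := fun n => Real.log (Real.log n) with hG
  have hlog2 : (0:ℝ) < Real.log 2 := Real.log_pos (by norm_num)
  have hlogn : ∀ n : ℕ, 2 ≤ n → (0:ℝ) < Real.log n := fun n hn =>
    Real.log_pos (by exact_mod_cast hn)
  have hlogN : (0:ℝ) < Real.log N := hlogn N hN
  have hlog2N : Real.log 2 ≤ Real.log N := by
    refine Real.log_le_log (by norm_num) (by exact_mod_cast hN)
  set W : ℕ → ℝ := fun n => ∑ p ∈ Nat.primesBelow (n+1), Real.log p / p with hW
  have expand : ∀ p ∈ Nat.primesBelow (N+1), (1:ℝ)/p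
      = (Real.log p / p) / Real.log N
        + ∑ n ∈ Finset.Ico 2 N,
            (if p ≤ n then (Real.log p/p) * (f n - f (n+1)) else 0) := by
    intro p hp
    have hp' := Nat.prime_of_mem_primesBelow hp
    have hpN : p ≤ N := by have := Nat.lt_of_mem_primesBelow hp; omega
    have hp2 : 2 ≤ p := hp'.two_le
    have hp0 : (0:ℝ) < p := by exact_mod_cast hp'.pos
    have hlogp : (0:ℝ) < Real.log p := hlogn p hp2
    have hsub : ∑ n ∈ Finset.Ico 2 N, (if p ≤ n then (Real.log p/p)*(f n - f (n+1)) else 0)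
        = ∑ n ∈ Finset.Ico p N, (Real.log p/p)*(f n - f (n+1)) := by
      rw [← Finset.sum_filter]
      congr 1
      ext n
      simp only [Finset.mem_filter, Finset.mem_Ico]
      omega
    rw [hsub, ← Finset.mul_sum, tele f hpN]
    simp only [hf]
    field_simp
    ring
  have key : ∑ p ∈ Nat.primesBelow (N+1), (1:ℝ)/p
      = W N / Real.log N
        + ∑ n ∈ Finset.Ico 2 N, (f n - f (n+1)) * W n := by
    rw [Finset.sum_congr rfl expand, Finset.sum_add_distrib, ← Finset.sum_div]
    congr 1
    rw [Finset.sum_comm]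
    refine Finset.sum_congr rfl fun n hn => ?_
    have hn' : 2 ≤ n ∧ n < N := by simpa [Finset.mem_Ico] using hn
    rw [← Finset.sum_filter]
    have hpb : (Nat.primesBelow (N+1)).filter (fun p => p ≤ n) = Nat.primesBelow (n+1) := by
      ext q
      simp only [Finset.mem_filter, Nat.mem_primesBelow]
      constructor
      · rintro ⟨⟨_, hq⟩, hqn⟩; exact ⟨by omega, hq⟩
      · rintro ⟨hq1, hq2⟩; exact ⟨⟨by omega, hq2⟩, by omega⟩
    rw [hpb, Finset.mul_sum]
    exact Finset.sum_congr rfl fun p _ => by ring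
  rw [key]
  have hWN : W N ≤ Real.log N + Real.log 4 := mertens1 (by omega)
  have h4 : (0:ℝ) ≤ Real.log 4 := Real.log_nonneg (by norm_num)
  have piece1 : W N / Real.log N ≤ 1 + Real.log 4 / Real.log 2 := by
    rw [div_le_iff₀ hlogN]
    have : Real.log 4 ≤ Real.log 4 / Real.log 2 * Real.log N := by
      rw [div_mul_eq_mul_div, le_div_iff₀ hlog2]
      exact mul_le_mul_of_nonneg_left hlog2N h4
    calc W N ≤ Real.log N + Real.log 4 := hWN
      _ ≤ Real.log N + Real.log 4 / Real.log 2 * Real.log N := by linarith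
      _ = (1 + Real.log 4 / Real.log 2) * Real.log N := by ring
  have piece2 : ∑ n ∈ Finset.Ico 2 N, (f n - f (n+1)) * W n
      ≤ (Real.log (Real.log N) + 1) + Real.log 4 / Real.log 2 := by
    have termbound : ∀ n ∈ Finset.Ico 2 N, (f n - f (n+1)) * W n
        ≤ (G (n+1) - G n) + (f n - f (n+1)) * Real.log 4 := by
      intro n hn
      have hn' : 2 ≤ n ∧ n < N := by simpa [Finset.mem_Ico] using hn
      have hla : (0:ℝ) < Real.log n := hlogn n hn'.1
      have hlb : (0:ℝ) < Real.log ((n+1:ℕ)) := hlogn (n+1) (by omega)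
      have hab : Real.log (n:ℕ) ≤ Real.log ((n+1:ℕ)) := by
        refine Real.log_le_log ?_ ?_
        · exact_mod_cast Nat.pos_of_ne_zero (by omega)
        · exact_mod_cast Nat.le_succ n
      have hd : 0 ≤ f n - f (n+1) := by
        simp only [hf]
        have : 1 / Real.log ((n+1:ℕ)) ≤ 1 / Real.log n := one_div_le_one_div_of_le hla hab
        linarith
      have hWb : W n ≤ Real.log n + Real.log 4 := mertens1 (by omega)
      have hfd : (f n - f (n+1)) * Real.log n
          = (Real.log ((n+1:ℕ)) - Real.log n) / Real.log ((n+1:ℕ)) := by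
        simp only [hf]
        exact alg1 _ _ hla.ne' hlb.ne'
      have step : (f n - f (n+1)) * Real.log n ≤ G (n+1) - G n := by
        rw [hfd, hG]
        have hq : (0:ℝ) < Real.log n / Real.log ((n+1:ℕ)) := by positivity
        have hlog := Real.log_le_sub_one_of_pos hq
        rw [Real.log_div hla.ne' hlb.ne'] at hlog
        have h2 : Real.log (n:ℝ) / Real.log ((n+1:ℕ)) - 1
            = -((Real.log ((n+1:ℕ)) - Real.log n) / Real.log ((n+1:ℕ))) :=
          alg2 _ _ hlb.ne'
        rw [h2] at hlog
        linarith
      calc (f n - f (n+1)) * W n ≤ (f n - f (n+1)) * (Real.log n + Real.log 4) :=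
            mul_le_mul_of_nonneg_left hWb hd
        _ = (f n - f (n+1)) * Real.log n + (f n - f (n+1)) * Real.log 4 := by ring
        _ ≤ _ := by linarith
    have htel1 : ∑ n ∈ Finset.Ico 2 N, (G (n+1) - G n) = G N - G 2 := by
      have h := tele G hN
      have h2 : ∑ n ∈ Finset.Ico 2 N, (G (n+1) - G n)
          = -∑ n ∈ Finset.Ico 2 N, (G n - G (n+1)) := by
        rw [← Finset.sum_neg_distrib]
        exact Finset.sum_congr rfl fun n _ => by ring
      rw [h2, h]; ring
    have htel2 : ∑ n ∈ Finset.Ico 2 N, (f n - f (n+1)) = f 2 - f N := tele f hN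
    have hG2 : (-1:ℝ) ≤ G 2 := by
      have he : (2:ℝ) ≤ Real.exp 1 := by have := Real.add_one_le_exp 1; linarith
      have hexp : Real.exp (-1) ≤ 1/2 := by
        rw [Real.exp_neg]
        have : (Real.exp 1)⁻¹ ≤ (2:ℝ)⁻¹ := by
          apply inv_anti₀ (by norm_num) he
        simpa [one_div] using this
      have hl2 : (1:ℝ)/2 ≤ Real.log 2 := by
        have := Real.log_two_gt_d9
        linarith
      have : Real.exp (-1) ≤ Real.log 2 := by linarith
      have hlog2' : (0:ℝ) < Real.log ((2:ℕ)) := by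
        have : ((2:ℕ):ℝ) = 2 := by norm_num
        rw [this]; exact hlog2
      rw [hG]
      rw [Real.le_log_iff_exp_le hlog2']
      have : ((2:ℕ):ℝ) = 2 := by norm_num
      rw [this]
      linarith
    calc ∑ n ∈ Finset.Ico 2 N, (f n - f (n+1)) * W n
        ≤ ∑ n ∈ Finset.Ico 2 N, ((G (n+1) - G n) + (f n - f (n+1)) * Real.log 4) :=
          Finset.sum_le_sum termbound
      _ = (G N - G 2) + (f 2 - f N) * Real.log 4 := by
          rw [Finset.sum_add_distrib, htel1, ← Finset.sum_mul, htel2]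
      _ ≤ (Real.log (Real.log N) + 1) + Real.log 4 / Real.log 2 := by
          have hfN : 0 ≤ f N := by
            simp only [hf]
            positivity
          have hf2 : f 2 = 1 / Real.log 2 := by
            simp only [hf]
            norm_num
          have hprod : (f 2 - f N) * Real.log 4 ≤ Real.log 4 / Real.log 2 := by
            have hle : f 2 - f N ≤ 1 / Real.log 2 := by rw [hf2]; linarith
            calc (f 2 - f N) * Real.log 4 ≤ (1/Real.log 2) * Real.log 4 :=
                  mul_le_mul_of_nonneg_right hle h4
              _ = Real.log 4 / Real.log 2 := by ring
          have hGN : G N = Real.log (Real.log N) := by rw [hG]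
          linarith
  have hratio : Real.log 4 / Real.log 2 = 2 := by
    rw [log4_eq]
    field_simp
  rw [hratio] at piece1 piece2
  linarith
lemma sum_inv_mul_pred (N : ℕ) :
    ∑ n ∈ Finset.Icc 2 N, (1:ℝ)/((n:ℝ)*((n:ℝ)-1)) ≤ 1 := by
  rcases Nat.lt_or_ge N 2 with hN2 | hN2
  · rw [Finset.Icc_eq_empty (by omega)]
    simp
  have h : ∀ n ∈ Finset.Icc 2 N, (1:ℝ)/((n:ℝ)*((n:ℝ)-1))
      = (fun m : ℕ => 1/((m:ℝ)-1)) n - (fun m : ℕ => 1/((m:ℝ)-1)) (n+1) := by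
    intro n hn
    have hn2 : 2 ≤ n := (Finset.mem_Icc.1 hn).1
    have h2 : (2:ℝ) ≤ (n:ℝ) := by exact_mod_cast hn2
    simp only
    push_cast
    rw [div_sub_div _ _ (by linarith) (by linarith)]
    congr 1 <;> ring
  rw [Finset.sum_congr rfl h]
  rw [show Finset.Icc 2 N = Finset.Ico 2 (N+1) by rfl]
  rw [tele (fun m : ℕ => 1/((m:ℝ)-1)) (show 2 ≤ N+1 by omega)]
  have h0 : (0:ℝ) ≤ 1/(((N+1:ℕ):ℝ)-1) := by
    apply div_nonneg zero_le_one
    push_cast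
    have : (0:ℝ) ≤ (N:ℝ) := Nat.cast_nonneg N
    linarith
  have h1 : (1:ℝ)/(((2:ℕ):ℝ)-1) = 1 := by norm_num
  linarith

lemma geom_tail {p N : ℕ} (hp : 2 ≤ p) :
    ∑ k ∈ Finset.Icc 1 N, (1:ℝ)/((p:ℕ)^k : ℕ) ≤ 1/((p:ℝ)-1) := by
  have hp1 : (1:ℝ) < p := by exact_mod_cast hp
  have hp0 : (0:ℝ) < p := by linarith
  set r : ℝ := ((p:ℝ))⁻¹ with hr
  have hr0 : 0 < r := by positivity
  have hr1 : r < 1 := by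
    rw [hr, inv_lt_one_iff₀]; right; exact hp1
  have hcast : ∀ k : ℕ, (1:ℝ)/((p:ℕ)^k : ℕ) = r^k := by
    intro k
    rw [hr]
    push_cast
    rw [one_div, inv_pow]
  rw [Finset.sum_congr rfl fun k _ => hcast k]
  rw [show Finset.Icc 1 N = Finset.Ico 1 (N+1) by rfl]
  rw [geom_sum_Ico hr1.ne (by omega)]
  have key : (r^(N+1) - r^1)/(r-1) = (r^1 - r^(N+1))/(1-r) := by
    rw [div_eq_div_iff (by linarith) (by linarith)]
    ring
  rw [key]
  have h1 : r^1 - r^(N+1) ≤ r := by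
    have : 0 ≤ r^(N+1) := by positivity
    simp only [pow_one]
    linarith
  have h2 : (0:ℝ) < 1 - r := by linarith
  have hp1' : (0:ℝ) < (p:ℝ) - 1 := by linarith
  calc (r^1 - r^(N+1))/(1-r) ≤ r/(1-r) := by gcongr
    _ = 1/((p:ℝ)-1) := by
        rw [hr, div_eq_div_iff h2.ne' hp1'.ne', one_mul, mul_sub,
          inv_mul_cancel₀ hp0.ne', mul_one, hr]
  

lemma primePowerSum {N : ℕ} (hN : 2 ≤ N) :
    ∑ q ∈ (Finset.Icc 2 N).filter (fun q => IsPrimePow q), (1:ℝ)/q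
      ≤ Real.log (Real.log N) + 7 := by
  classical
  set Q := (Finset.Icc 2 N).filter (fun q => IsPrimePow q) with hQ
  set g : ℕ → ℕ × ℕ := fun q => (q.minFac, q.factorization q.minFac) with hg
  have hrec : ∀ q ∈ Q, q.minFac.Prime ∧ 1 ≤ q.factorization q.minFac ∧
      q.minFac ^ (q.factorization q.minFac) = q := by
    intro q hq
    simp only [hQ, Finset.mem_filter, Finset.mem_Icc] at hq
    obtain ⟨⟨hq2, hqN⟩, p, k, hp, hk, hpk⟩ := hq
    rw [← Nat.prime_iff] at hp
    have h1 : q.minFac = p := by rw [← hpk]; exact Nat.Prime.pow_minFac hp (by omega)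
    have h2 : q.factorization q.minFac = k := by
      rw [h1, ← hpk, Nat.Prime.factorization_pow hp]
      simp
    rw [h1] at h2 ⊢
    rw [h2]
    exact ⟨hp, by omega, hpk⟩
  have hrecov : ∀ q ∈ Q, (g q).1 ^ (g q).2 = q := fun q hq => (hrec q hq).2.2
  have hinj : ∀ q₁ ∈ Q, ∀ q₂ ∈ Q, g q₁ = g q₂ → q₁ = q₂ := by
    intro q₁ h₁ q₂ h₂ heq
    rw [← hrecov q₁ h₁, ← hrecov q₂ h₂, heq]
  set F : ℕ × ℕ → ℝ := fun y => (1:ℝ)/((y.1 ^ y.2 : ℕ) : ℝ) with hF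
  have himg : Q.image g ⊆ (Nat.primesBelow (N+1)) ×ˢ (Finset.Icc 1 N) := by
    intro y hy
    obtain ⟨q, hq, rfl⟩ := Finset.mem_image.1 hy
    obtain ⟨hp, hk, hpk⟩ := hrec q hq
    have hqN : q ≤ N := by
      simp only [hQ, Finset.mem_filter, Finset.mem_Icc] at hq
      exact hq.1.2
    simp only [Finset.mem_product, Nat.mem_primesBelow, Finset.mem_Icc]
    refine ⟨⟨?_, hp⟩, hk, ?_⟩
    · have : q.minFac ≤ q := Nat.minFac_le (by
        simp only [hQ, Finset.mem_filter, Finset.mem_Icc] at hq; omega)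
      simp only [hg]
      omega
    · -- k ≤ N since 2^k ≤ p^k = q ≤ N and k < 2^k
      have h2k : 2 ^ (q.factorization q.minFac) ≤ q := by
        calc 2 ^ (q.factorization q.minFac) ≤ q.minFac ^ (q.factorization q.minFac) :=
              Nat.pow_le_pow_left hp.two_le _
          _ = q := hpk
      have := Nat.lt_two_pow_self (n := q.factorization q.minFac)
      simp only [hg]
      omega
  have step1 : ∑ q ∈ Q, (1:ℝ)/q = ∑ y ∈ Q.image g, F y := by
    rw [Finset.sum_image hinj]
    refine Finset.sum_congr rfl fun q hq => ?_
    rw [hF]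
    simp only
    rw [hrecov q hq]
  have step2 : ∑ y ∈ Q.image g, F y
      ≤ ∑ y ∈ (Nat.primesBelow (N+1)) ×ˢ (Finset.Icc 1 N), F y := by
    refine Finset.sum_le_sum_of_subset_of_nonneg himg fun y _ _ => ?_
    exact div_nonneg zero_le_one (Nat.cast_nonneg _)
  have step3 : ∑ y ∈ (Nat.primesBelow (N+1)) ×ˢ (Finset.Icc 1 N), F y
      ≤ ∑ p ∈ Nat.primesBelow (N+1), ((1:ℝ)/p + 1/((p:ℝ)*((p:ℝ)-1))) := by
    rw [Finset.sum_product]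
    refine Finset.sum_le_sum fun p hp => ?_
    have hp' := Nat.prime_of_mem_primesBelow hp
    have hp2 : (2:ℝ) ≤ p := by exact_mod_cast hp'.two_le
    have : ∑ k ∈ Finset.Icc 1 N, F (p, k) ≤ 1/((p:ℝ)-1) := geom_tail hp'.two_le
    refine this.trans (le_of_eq ?_)
    have h0 : (p:ℝ) ≠ 0 := by linarith
    have h1 : (p:ℝ) - 1 ≠ 0 := (by linarith : (0:ℝ) < (p:ℝ)-1).ne'
    field_simp
    ring
  have step4 : ∑ p ∈ Nat.primesBelow (N+1), ((1:ℝ)/p + 1/((p:ℝ)*((p:ℝ)-1)))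
      ≤ (Real.log (Real.log N) + 6) + 1 := by
    rw [Finset.sum_add_distrib]
    refine add_le_add (mertens2 hN) ?_
    refine le_trans ?_ (sum_inv_mul_pred N)
    refine Finset.sum_le_sum_of_subset_of_nonneg ?_ fun n hn _ => ?_
    · intro p hp
      have hp' := Nat.prime_of_mem_primesBelow hp
      have := Nat.lt_of_mem_primesBelow hp
      simp only [Finset.mem_Icc]
      exact ⟨hp'.two_le, by omega⟩
    · have h2 : (2:ℝ) ≤ n := by exact_mod_cast (Finset.mem_Icc.1 hn).1
      apply div_nonneg zero_le_one
      nlinarith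
  calc ∑ q ∈ Q, (1:ℝ)/q = ∑ y ∈ Q.image g, F y := step1
    _ ≤ _ := step2
    _ ≤ _ := step3
    _ ≤ (Real.log (Real.log N) + 6) + 1 := step4
    _ = Real.log (Real.log N) + 7 := by ring

lemma esymm_bound (a : ℕ → ℝ) (ha : ∀ i, 0 ≤ a i) (s : Finset ℕ) :
    ∀ t : ℕ, (t.factorial : ℝ) * ∑ u ∈ s.powersetCard t, ∏ i ∈ u, a i
      ≤ (∑ i ∈ s, a i)^t := by
  classical
  induction s using Finset.induction_on with
  | empty =>
    intro t
    cases t with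
    | zero => simp
    | succ r =>
      rw [Finset.powersetCard_eq_empty.2 (by simp)]
      simp
  | @insert x s hx ih =>
    intro t
    cases t with
    | zero => simp
    | succ r =>
      have hS : 0 ≤ ∑ i ∈ s, a i := Finset.sum_nonneg fun i _ => ha i
      have hsplit : ∑ u ∈ (insert x s).powersetCard (r+1), ∏ i ∈ u, a i
          = (∑ u ∈ s.powersetCard (r+1), ∏ i ∈ u, a i)
            + a x * ∑ u ∈ s.powersetCard r, ∏ i ∈ u, a i := by
        rw [Finset.powersetCard_succ_insert hx, Finset.sum_union, Finset.sum_image]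
        · congr 1
          rw [Finset.mul_sum]
          refine Finset.sum_congr rfl fun u hu => ?_
          have hxu : x ∉ u := fun h => hx ((Finset.mem_powersetCard.1 hu).1 h)
          rw [Finset.prod_insert hxu]
        · intro u hu v hv huv
          have hxu : x ∉ u := fun h => hx ((Finset.mem_powersetCard.1 hu).1 h)
          have hxv : x ∉ v := fun h => hx ((Finset.mem_powersetCard.1 hv).1 h)
          have := congrArg (fun w => Finset.erase w x) huv
          simpa [Finset.erase_insert hxu, Finset.erase_insert hxv] using this
        · rw [Finset.disjoint_left]
          intro u hu hu'
          obtain ⟨v, hv, rfl⟩ := Finset.mem_image.1 hu'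
          have : insert x v ⊆ s := (Finset.mem_powersetCard.1 hu).1
          exact hx (this (Finset.mem_insert_self x v))
      rw [hsplit, Finset.sum_insert hx]
      set S := ∑ i ∈ s, a i
      set E1 := ∑ u ∈ s.powersetCard (r+1), ∏ i ∈ u, a i
      set E0 := ∑ u ∈ s.powersetCard r, ∏ i ∈ u, a i
      have hE0 : 0 ≤ E0 := Finset.sum_nonneg fun u hu =>
        Finset.prod_nonneg fun i _ => ha i
      have ih1 : ((r+1).factorial : ℝ) * E1 ≤ S^(r+1) := ih (r+1)
      have ih0 : (r.factorial : ℝ) * E0 ≤ S^r := ih r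
      have hfact : (((r+1).factorial:ℕ) : ℝ) = ((r:ℝ)+1) * (r.factorial : ℝ) := by
        rw [Nat.factorial_succ]; push_cast; ring
      have hbinom : S^(r+1) + ((r:ℝ)+1) * a x * S^r ≤ (S + a x)^(r+1) := by
        rw [add_pow]
        rw [Finset.sum_range_succ, Finset.sum_range_succ]
        have e1 : S ^ (r+1) * a x ^ (r+1-(r+1)) * (((r+1).choose (r+1) : ℕ) : ℝ) = S^(r+1) := by
          simp [Nat.choose_self]
        have e2 : S ^ r * a x ^ (r+1-r) * (((r+1).choose r : ℕ) : ℝ) = ((r:ℝ)+1) * a x * S^r := by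
          have hr1 : r+1-r = 1 := by omega
          rw [hr1, pow_one, Nat.choose_succ_self_right]
          push_cast; ring
        rw [e1, e2]
        have hrest : 0 ≤ ∑ k ∈ Finset.range r, S ^ k * a x ^ (r+1-k) * (((r+1).choose k : ℕ) : ℝ) :=
          Finset.sum_nonneg fun k _ =>
            mul_nonneg (mul_nonneg (pow_nonneg hS _) (pow_nonneg (ha x) _)) (Nat.cast_nonneg _)
        linarith
      have hmid : (((r+1).factorial:ℕ):ℝ) * (E1 + a x * E0) ≤ S^(r+1) + ((r:ℝ)+1) * a x * S^r := by
        have h3 : ((r:ℝ)+1) * (a x * ((r.factorial:ℝ) * E0)) ≤ ((r:ℝ)+1) * (a x * S^r) := by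
          apply mul_le_mul_of_nonneg_left _ (by positivity)
          exact mul_le_mul_of_nonneg_left ih0 (ha x)
        calc (((r+1).factorial:ℕ):ℝ) * (E1 + a x * E0)
            = (((r+1).factorial:ℕ):ℝ) * E1 + ((r:ℝ)+1) * (a x * ((r.factorial:ℝ) * E0)) := by
              rw [hfact]; ring
          _ ≤ S^(r+1) + ((r:ℝ)+1) * (a x * S^r) := add_le_add ih1 h3
          _ = S^(r+1) + ((r:ℝ)+1) * a x * S^r := by ring
      rw [add_comm (a x) S]
      exact hmid.trans hbinom

/-- Partial-summation consequence of the Hardy–Ramanujan theorem: for `t ≥ 1` and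
`x > e`, `∑_{m ≤ x, ω(m) = t} 1/m ≪ (κ + log log x)^t / (t−1)!` with absolute
constants. Here `ω(m)` is the number of distinct prime factors of `m`. -/
theorem hardy_ramanujan_partial_summation :
    ∃ κ > (0 : ℝ), ∃ C > (0 : ℝ), ∀ t : ℕ, 1 ≤ t → ∀ x : ℝ, Real.exp 1 < x →
      (∑ m ∈ (Finset.Icc 1 ⌊x⌋₊).filter (fun m : ℕ => m.primeFactors.card = t),
          (1 : ℝ) / m) ≤
        C * (κ + Real.log (Real.log x)) ^ t / (t - 1).factorial := by
  classical
  refine ⟨10, by norm_num, 1, by norm_num, fun t ht x hx => ?_⟩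
  set N := ⌊x⌋₊ with hN
  have he2 : (2:ℝ) < Real.exp 1 := by
    have := Real.add_one_le_exp 1
    have h2 := Real.exp_one_gt_d9
    norm_num at h2 ⊢
    linarith
  have hx2 : (2:ℝ) < x := lt_trans he2 hx
  have hN2 : 2 ≤ N := by
    rw [hN]
    exact Nat.le_floor (by exact_mod_cast hx2.le)
  have hNx : (N:ℝ) ≤ x := Nat.floor_le (by linarith)
  have hlogN : (0:ℝ) < Real.log N := Real.log_pos (by exact_mod_cast hN2)
  have hlogx : (1:ℝ) < Real.log x := by
    rw [show (1:ℝ) = Real.log (Real.exp 1) by rw [Real.log_exp]]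
    exact Real.log_lt_log (Real.exp_pos 1) hx
  have hL : (0:ℝ) < Real.log (Real.log x) := Real.log_pos hlogx
  have hLN : Real.log (Real.log N) ≤ Real.log (Real.log x) :=
    Real.log_le_log hlogN (Real.log_le_log (by positivity) hNx)
  set A := (Finset.Icc 1 N).filter (fun m : ℕ => m.primeFactors.card = t) with hA
  set Q := (Finset.Icc 2 N).filter (fun q => IsPrimePow q) with hQ
  set f : ℕ → Finset ℕ :=
    fun m => m.primeFactors.image (fun p => p ^ m.factorization p) with hf
  -- basic facts about members of A
  have hA0 : ∀ m ∈ A, m ≠ 0 := by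
    intro m hm
    have := (Finset.mem_Icc.1 (Finset.mem_filter.1 hm).1).1
    omega
  have hinjP : ∀ m ∈ A, Set.InjOn (fun p => p ^ m.factorization p) (m.primeFactors : Set ℕ) := by
    intro m hm p hp q hq hpq
    simp only [Finset.mem_coe] at hp hq
    simp only at hpq
    have hp' := Nat.prime_of_mem_primeFactors hp
    have hq' := Nat.prime_of_mem_primeFactors hq
    have hep : m.factorization p ≠ 0 :=
      (Nat.Prime.factorization_pos_of_dvd hp' (hA0 m hm) (Nat.dvd_of_mem_primeFactors hp)).ne'
    have heq : m.factorization q ≠ 0 :=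
      (Nat.Prime.factorization_pos_of_dvd hq' (hA0 m hm) (Nat.dvd_of_mem_primeFactors hq)).ne'
    have := congrArg Nat.primeFactors hpq
    rw [Nat.primeFactors_pow p hep, Nat.primeFactors_pow q heq,
      hp'.primeFactors, hq'.primeFactors] at this
    exact Finset.singleton_injective this
  have hprod : ∀ m ∈ A, ∏ q ∈ f m, q = m := by
    intro m hm
    rw [hf]
    simp only
    rw [Finset.prod_image (hinjP m hm)]
    rw [← Nat.prod_factorization_eq_prod_primeFactors]
    exact Nat.factorization_prod_pow_eq_self (hA0 m hm)
  have hcard : ∀ m ∈ A, (f m).card = t := by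
    intro m hm
    rw [hf]
    simp only
    rw [Finset.card_image_of_injOn (hinjP m hm)]
    exact (Finset.mem_filter.1 hm).2
  have hsub : ∀ m ∈ A, f m ⊆ Q := by
    intro m hm q hq
    rw [hf] at hq
    simp only [Finset.mem_image] at hq
    obtain ⟨p, hp, rfl⟩ := hq
    have hp' := Nat.prime_of_mem_primeFactors hp
    have hep : m.factorization p ≠ 0 :=
      (Nat.Prime.factorization_pos_of_dvd hp' (hA0 m hm) (Nat.dvd_of_mem_primeFactors hp)).ne'
    have hdvd : p ^ m.factorization p ∣ m := Nat.ordProj_dvd m p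
    have hmN : m ≤ N := (Finset.mem_Icc.1 (Finset.mem_filter.1 hm).1).2
    rw [hQ]
    simp only [Finset.mem_filter, Finset.mem_Icc]
    refine ⟨⟨?_, le_trans (Nat.le_of_dvd (Nat.pos_of_ne_zero (hA0 m hm)) hdvd) hmN⟩, ?_⟩
    · calc 2 ≤ p := hp'.two_le
        _ ≤ p ^ m.factorization p := Nat.le_self_pow hep p
    · exact ⟨p, m.factorization p, Nat.prime_iff.1 hp', Nat.pos_of_ne_zero hep, rfl⟩
  have hinjA : ∀ m₁ ∈ A, ∀ m₂ ∈ A, f m₁ = f m₂ → m₁ = m₂ := by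
    intro m₁ h₁ m₂ h₂ h
    rw [← hprod m₁ h₁, ← hprod m₂ h₂, h]
  have hone : ∀ m ∈ A, (1:ℝ)/m = ∏ q ∈ f m, (1:ℝ)/q := by
    intro m hm
    rw [Finset.prod_div_distrib, Finset.prod_const_one, ← Nat.cast_prod, hprod m hm]
  have himgsub : A.image f ⊆ Q.powersetCard t := by
    intro u hu
    obtain ⟨m, hm, rfl⟩ := Finset.mem_image.1 hu
    exact Finset.mem_powersetCard.2 ⟨hsub m hm, hcard m hm⟩
  have hQsum : ∑ q ∈ Q, (1:ℝ)/q ≤ 10 + Real.log (Real.log x) := by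
    calc ∑ q ∈ Q, (1:ℝ)/q ≤ Real.log (Real.log N) + 7 := primePowerSum hN2
      _ ≤ 10 + Real.log (Real.log x) := by linarith
  have hQnonneg : (0:ℝ) ≤ ∑ q ∈ Q, (1:ℝ)/q :=
    Finset.sum_nonneg fun q _ => div_nonneg zero_le_one (Nat.cast_nonneg q)
  -- main chain
  have main : ∑ m ∈ A, (1:ℝ)/m ≤ (10 + Real.log (Real.log x))^t / t.factorial := by
    calc ∑ m ∈ A, (1:ℝ)/m = ∑ m ∈ A, ∏ q ∈ f m, (1:ℝ)/q := Finset.sum_congr rfl hone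
      _ = ∑ u ∈ A.image f, ∏ q ∈ u, (1:ℝ)/q := by
          rw [Finset.sum_image hinjA]
      _ ≤ ∑ u ∈ Q.powersetCard t, ∏ q ∈ u, (1:ℝ)/q := by
          refine Finset.sum_le_sum_of_subset_of_nonneg himgsub fun u _ _ => ?_
          exact Finset.prod_nonneg fun q _ => div_nonneg zero_le_one (Nat.cast_nonneg q)
      _ ≤ (∑ q ∈ Q, (1:ℝ)/q)^t / t.factorial := by
          rw [le_div_iff₀ (by exact_mod_cast t.factorial_pos)]
          rw [mul_comm]
          exact esymm_bound (fun q => (1:ℝ)/q) (fun q => div_nonneg zero_le_one (Nat.cast_nonneg q)) Q t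
      _ ≤ (10 + Real.log (Real.log x))^t / t.factorial := by
          gcongr
  refine main.trans ?_
  rw [one_mul]
  apply div_le_div_of_nonneg_left (by positivity) (by exact_mod_cast (t-1).factorial_pos)
  exact_mod_cast Nat.factorial_le (by omega : t - 1 ≤ t)
end
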